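/- arXiv:cond-mat/9805241 — 5 statements merged into one kernel-verified Lean document; each statement's English description precedes it below -/
import Mathlib

section
/- Under the duality hypothesis on T_0,…,T_5, for every v ∈ ℂ: Λ_{(4,4)/(2)}(v) = Λ_{(3,1)}(v + (2/5)i). -/
noncomputable section

/-- `T'_m`: equal to `T_m` for `0 ≤ m ≤ 5`, and the zero function otherwise. -/
def Tp (T : ℤ → ℂ → ℂ) (m : ℤ) : ℂ → ℂ :=
  if 0 ≤ m ∧ m ≤ 5 then T m else 0

/-- `Λ_{μ/λ}(v) := det_{1 ≤ j,k ≤ d} T'_{μ_j - λ_k - j + k}(v + i(d - μ_1 + μ_j + λ_k - j - k + 1))`,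
with rows and columns indexed by `j k : Fin d` (0-based, so row `j+1`, column `k+1`). -/
def Lam {d : ℕ} [NeZero d] (T : ℤ → ℂ → ℂ) (μ lam : Fin d → ℤ) (v : ℂ) : ℂ :=
  Matrix.det (Matrix.of fun j k : Fin d =>
    Tp T (μ j - lam k - ((j : ℕ) : ℤ) + ((k : ℕ) : ℤ))
      (v + Complex.I *
        (((d : ℤ) - μ 0 + μ j + lam k - ((j : ℕ) : ℤ) - ((k : ℕ) : ℤ) - 1 : ℤ) : ℂ)))

/-- The duality relation `T_m(v) = T_{5-m}(v + (8/5)i)` for `m = 0,…,5`. -/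
def DualityHyp (T : ℤ → ℂ → ℂ) : Prop :=
  ∀ m : ℤ, 0 ≤ m → m ≤ 5 → ∀ v : ℂ, T m v = T (5 - m) (v + (8 / 5 : ℂ) * Complex.I)

/-! Both sides are 2 × 2 determinants. After the shift by `2i/5`, the duality
`T_m(z) = T_{5-m}(z + 8i/5)` carries each of the four entries of `Λ_{(3,1)}` to an entry of
`Λ_{(4,4)/(2)}`, with the two products of the determinant matched up. -/

open Complex

theorem Tp_eq_of_nonneg_of_le {T : ℤ → ℂ → ℂ} {m : ℤ} (h0 : 0 ≤ m) (h5 : m ≤ 5) :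
    Tp T m = T m :=
  if_pos ⟨h0, h5⟩

theorem Lam_fin_two (T : ℤ → ℂ → ℂ) (μ lam : Fin 2 → ℤ) (v : ℂ) :
    Lam T μ lam v =
      Tp T (μ 0 - lam 0) (v + I * ((1 + lam 0 : ℤ) : ℂ)) *
          Tp T (μ 1 - lam 1) (v + I * ((μ 1 - μ 0 + lam 1 - 1 : ℤ) : ℂ)) -
        Tp T (μ 0 - lam 1 + 1) (v + I * (lam 1 : ℂ)) *
          Tp T (μ 1 - lam 0 - 1) (v + I * ((μ 1 - μ 0 + lam 0 : ℤ) : ℂ)) := by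
  rw [Lam, Matrix.det_fin_two]
  simp only [Matrix.of_apply, Fin.val_zero, Fin.val_one]
  push_cast
  ring_nf

theorem DualityHyp.apply_eq_of_add_eq_five {T : ℤ → ℂ → ℂ} (hdual : DualityHyp T) {m n : ℤ}
    (h0 : 0 ≤ m) (h5 : m ≤ 5) (hmn : m + n = 5) {z w : ℂ} (hw : w = z + 8 / 5 * I) :
    T m z = T n w := by
  obtain rfl : n = 5 - m := by omega
  exact hw ▸ hdual m h0 h5 z

/-- Duality relation (1): `Λ_{(4,4)/(2)}(v) = Λ_{(3,1)}(v + (2/5)i)`. -/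
theorem lam_duality_44_2 (T : ℤ → ℂ → ℂ) (hdual : DualityHyp T) (v : ℂ) :
    Lam T ![4, 4] ![2, 0] v = Lam T ![3, 1] ![0, 0] (v + (2 / 5 : ℂ) * Complex.I) := by
  set w := v + 2 / 5 * I
  have lam_left : Lam T ![4, 4] ![2, 0] v =
      T 2 (v + 3 * I) * T 4 (v - I) - T 5 v * T 1 (v + 2 * I) := by
    norm_num [Lam_fin_two, Tp_eq_of_nonneg_of_le]
    ring_nf
  have lam_right : Lam T ![3, 1] ![0, 0] w =
      T 3 (w + I) * T 1 (w - 3 * I) - T 4 w * T 0 (w - 2 * I) := by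
    norm_num [Lam_fin_two, Tp_eq_of_nonneg_of_le]
    ring_nf
  have h3 : T 3 (w + I) = T 2 (v + 3 * I) :=
    hdual.apply_eq_of_add_eq_five (by norm_num) (by norm_num) rfl (by ring)
  have h1 : T 1 (w - 3 * I) = T 4 (v - I) :=
    hdual.apply_eq_of_add_eq_five (by norm_num) (by norm_num) rfl (by ring)
  have h4 : T 4 w = T 1 (v + 2 * I) :=
    hdual.apply_eq_of_add_eq_five (by norm_num) (by norm_num) rfl (by ring)
  have h0 : T 0 (w - 2 * I) = T 5 v :=
    hdual.apply_eq_of_add_eq_five (by norm_num) (by norm_num) rfl (by ring)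
  rw [lam_left, lam_right, h3, h1, h4, h0]
  ring

end
end

section
/- Under the duality hypothesis on T_0,…,T_5, for every v ∈ ℂ: Λ_{(4,4)/(3)}(v) = Λ_{(4,1)}(v + (7/5)i). -/
noncomputable section

/-!
Both sides are `2 × 2` determinants. Expanding them, each factor on the right-hand side is
carried by one application of the duality `T_m(u) = T_{5-m}(u + 8i/5)` onto a factor on the
left-hand side, and the two products match.
-/

open Complex

theorem DualityHyp.apply_eq {T : ℤ → ℂ → ℂ} (hdual : DualityHyp T) {m n : ℤ} (hm₀ : 0 ≤ m)
    (hm₅ : m ≤ 5) (hmn : m + n = 5) {v w : ℂ} (hvw : w = v + 8 / 5 * I) : T m v = T n w := by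
  rw [hdual m hm₀ hm₅ v, hvw, show 5 - m = n by omega]

theorem lam_44_3_eq (T : ℤ → ℂ → ℂ) (v : ℂ) :
    Lam T ![4, 4] ![3, 0] v = T 1 (v + 4 * I) * T 4 (v - I) - T 5 v * T 0 (v + 3 * I) := by
  norm_num [Lam, Matrix.det_fin_two, Tp]
  ring_nf

theorem lam_41_eq (T : ℤ → ℂ → ℂ) (w : ℂ) :
    Lam T ![4, 1] ![0, 0] w = T 4 (w + I) * T 1 (w - 4 * I) - T 5 w * T 0 (w - 3 * I) := by
  norm_num [Lam, Matrix.det_fin_two, Tp]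
  ring_nf

/-- Duality relation (3): `Λ_{(4,4)/(3)}(v) = Λ_{(4,1)}(v + (7/5)i)`. -/
theorem lam_duality_44_3 (T : ℤ → ℂ → ℂ) (hdual : DualityHyp T) (v : ℂ) :
    Lam T ![4, 4] ![3, 0] v = Lam T ![4, 1] ![0, 0] (v + (7 / 5 : ℂ) * Complex.I) := by
  have h₄ : T 4 (v + 7 / 5 * I + I) = T 1 (v + 4 * I) :=
    hdual.apply_eq (by norm_num) (by norm_num) (by norm_num) (by ring)
  have h₁ : T 1 (v + 7 / 5 * I - 4 * I) = T 4 (v - I) :=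
    hdual.apply_eq (by norm_num) (by norm_num) (by norm_num) (by ring)
  have h₅ : T 5 (v + 7 / 5 * I) = T 0 (v + 3 * I) :=
    hdual.apply_eq (by norm_num) (by norm_num) (by norm_num) (by ring)
  have h₀ : T 0 (v + 7 / 5 * I - 3 * I) = T 5 v :=
    hdual.apply_eq (by norm_num) (by norm_num) (by norm_num) (by ring)
  rw [lam_44_3_eq, lam_41_eq, h₄, h₁, h₅, h₀]
  ring

end
end

section
/- Under the duality hypothesis on T_0,…,T_5, for every v ∈ ℂ: Λ_{(7,4,4)/(3,3)}(v) = Λ_{(4,4,1)/(3)}(v + (8/5)i). -/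
noncomputable section

/-! The duality `m ↦ 5 - m` also holds for the zero-extended `T'`, since it maps `[0, 5]` onto
itself. When `μ - λ'` and `μ' - λ` are constant and add up to `5`, and `λ 0 = λ' 0`, it sends the
`(j, k)` entry of the matrix of `Λ_{μ/λ}(v)` to the `(k, j)` entry of that of
`Λ_{μ'/λ'}(v + (8/5)i)`, so the two determinants agree. Here `(7,4,4) - (3,0,0) = 4` and
`(4,4,1) - (3,3,0) = 1`. -/

theorem Tp_eq_Tp_five_sub {T : ℤ → ℂ → ℂ} (hdual : DualityHyp T) (m : ℤ) (v : ℂ) :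
    Tp T m v = Tp T (5 - m) (v + (8 / 5 : ℂ) * Complex.I) := by
  unfold Tp
  split_ifs with hm hm' hm'
  · exact hdual m hm.1 hm.2 v
  · omega
  · omega
  · rfl

theorem Lam_eq_Lam_of_sub_const {d : ℕ} [NeZero d] {T : ℤ → ℂ → ℂ} (hdual : DualityHyp T)
    {μ lam μ' lam' : Fin d → ℤ} (c : ℤ) (hμ : ∀ j, μ j - lam' j = c)
    (hμ' : ∀ k, μ' k - lam k = 5 - c) (hlam : lam 0 = lam' 0) (v : ℂ) :
    Lam T μ lam v = Lam T μ' lam' (v + (8 / 5 : ℂ) * Complex.I) := by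
  rw [Lam, Lam, ← Matrix.det_transpose]
  congr 1
  ext k j
  simp only [Matrix.transpose_apply, Matrix.of_apply]
  have hj := hμ j; have hk := hμ' k; have h0 := hμ 0; have h0' := hμ' 0
  rw [Tp_eq_Tp_five_sub hdual]
  congr 1
  · omega
  · have hshift : (d : ℤ) - μ 0 + μ j + lam k - j - k - 1
        = (d : ℤ) - μ' 0 + μ' k + lam' j - k - j - 1 := by omega
    rw [hshift]
    ring

/-- Duality relation (4): `Λ_{(7,4,4)/(3,3)}(v) = Λ_{(4,4,1)/(3)}(v + (8/5)i)`. -/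
theorem lam_duality_744_33 (T : ℤ → ℂ → ℂ) (hdual : DualityHyp T) (v : ℂ) :
    Lam T ![7, 4, 4] ![3, 3, 0] v = Lam T ![4, 4, 1] ![3, 0, 0] (v + (8 / 5 : ℂ) * Complex.I) := by
  apply Lam_eq_Lam_of_sub_const hdual 4
  · intro j; fin_cases j <;> rfl
  · intro k; fin_cases k <;> rfl
  · rfl

end
end

section
/- Under the duality hypothesis on T_0,…,T_5, for every v ∈ ℂ: Λ_{(7,7,4,4)/(6,3,3)}(v) = Λ_{(7,4,4,1)/(3,3)}(v + (7/5)i). -/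
/-!
Both sides are 4 × 4 determinants. Since `(7,4,4,1) = (6,3,3,0) + 1` and `(3,3,0,0) = (7,7,4,4) - 4`,
applying the duality `T'_m(w) = T'_{5-m}(w + (8/5)i)` to every entry of the right-hand matrix
turns it into the transpose of the left-hand matrix.
-/

noncomputable section

theorem Tp_duality {T : ℤ → ℂ → ℂ} (hdual : DualityHyp T) (m : ℤ) (w : ℂ) :
    Tp T m w = Tp T (5 - m) (w + (8 / 5 : ℂ) * Complex.I) := by
  unfold Tp
  by_cases hm : 0 ≤ m ∧ m ≤ 5
  · rw [if_pos hm, if_pos ⟨by omega, by omega⟩]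
    exact hdual m hm.1 hm.2 w
  · rw [if_neg hm, if_neg (by omega)]
    rfl

theorem Lam_eq_Lam_shift {d : ℕ} [NeZero d] {T : ℤ → ℂ → ℂ} (hdual : DualityHyp T)
    (μ lam : Fin d → ℤ) (a : ℤ) (v : ℂ) :
    Lam T μ lam v =
      Lam T (fun k => lam k + a) (fun j => μ j + a - 5)
        (v + ((lam 0 - μ 0 - a + 5 : ℤ) - 8 / 5 : ℂ) * Complex.I) := by
  unfold Lam
  rw [← Matrix.det_transpose]
  congr 1
  ext j k
  simp only [Matrix.transpose_apply, Matrix.of_apply]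
  conv_rhs => rw [Tp_duality hdual]
  congr 1
  · ring
  · push_cast
    ring

/-- Duality relation (6): `Λ_{(7,7,4,4)/(6,3,3)}(v) = Λ_{(7,4,4,1)/(3,3)}(v + (7/5)i)`. -/
theorem lam_duality_7744_633 (T : ℤ → ℂ → ℂ) (hdual : DualityHyp T) (v : ℂ) :
    Lam T ![7, 7, 4, 4] ![6, 3, 3, 0] v =
      Lam T ![7, 4, 4, 1] ![3, 3, 0, 0] (v + (7 / 5 : ℂ) * Complex.I) := by
  have hμ : (![7, 4, 4, 1] : Fin 4 → ℤ) = fun k => ![6, 3, 3, 0] k + 1 := by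
    ext k; fin_cases k <;> rfl
  have hlam : (![3, 3, 0, 0] : Fin 4 → ℤ) = fun j => ![7, 7, 4, 4] j + 1 - 5 := by
    ext j; fin_cases j <;> rfl
  rw [Lam_eq_Lam_shift hdual _ _ 1, hμ, hlam]
  norm_num

end
end

section
/- Let φ : ℂ → ℂ satisfy φ(v + (16/5)i) = φ(v) for all v ∈ ℂ, and for m ≥ 2 define f_m(v) := ∏_{j=1}^{m−1} φ(v + i((2m−1)/2 − j)) · φ(v − i((2m−1)/2 − j)). Then for every v ∈ ℂ: f_2(v) · f_2(v + i) · f_2(v + 2i) · f_2(v + (8/5)i) · f_3(v + 5i) · f_4(v − 4i) = f_5(v − 7i) · f_5(v + i) · f_2(v − (27/5)i). -/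
/-!
Expanding each `f_m` into its `2(m - 1)` factors `φ(w ± i(2k+1)/2)`, every factor on either side
is a value `φ(v + t i)` with `t` rational. Twelve values appear on both sides; the remaining six
on the right-hand side, at `t = -59/10, -49/10, -17/2, -15/2, -21/2, -19/2`, are carried to those
on the left at `t = 1/2, 3/2, 11/10, 21/10, 11/2, 13/2` by adding 2, 2, 3, 3, 5, 5 periods `16/5`.
-/

open Complex Finset Function

noncomputable section

/-- `f_m(v) := ∏_{j=1}^{m-1} φ(v + i((2m-1)/2 - j)) · φ(v - i((2m-1)/2 - j))`. -/
def ff (φ : ℂ → ℂ) (m : ℕ) (v : ℂ) : ℂ :=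
  ∏ j ∈ Finset.Icc 1 (m - 1),
    (φ (v + Complex.I * ((2 * (m : ℂ) - 1) / 2 - (j : ℂ))) *
      φ (v - Complex.I * ((2 * (m : ℂ) - 1) / 2 - (j : ℂ))))

theorem ff_succ_eq_prod_range (φ : ℂ → ℂ) (n : ℕ) (v : ℂ) :
    ff φ (n + 1) v =
      ∏ k ∈ range n, φ (v + (2 * k + 1) / 2 * I) * φ (v - (2 * k + 1) / 2 * I) := by
  rw [ff, Nat.add_sub_cancel, ← Ico_add_one_right_eq_Icc, prod_Ico_eq_prod_range,
    Nat.add_sub_cancel, ← prod_range_reflect]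
  refine prod_congr rfl fun k hk => ?_
  have hkn : k + 1 ≤ n := mem_range.mp hk
  have hindex : ((1 + (n - 1 - k) : ℕ) : ℂ) = n - k := by
    rw [Nat.cast_add, Nat.cast_sub (by omega), Nat.cast_sub (by omega)]
    ring
  rw [hindex]
  push_cast
  ring_nf

/-- The identity among products of `f_m`'s to which the paper reduces the proof of
relation (rel2) of its Lemma 2:
`f_2(v) f_2(v+i) f_2(v+2i) f_2(v+(8/5)i) f_3(v+5i) f_4(v-4i)
  = f_5(v-7i) f_5(v+i) f_2(v-(27/5)i)`. -/
theorem ff_identity (φ : ℂ → ℂ)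
    (hper : ∀ v : ℂ, φ (v + (16 / 5 : ℂ) * Complex.I) = φ v) (v : ℂ) :
    ff φ 2 v * ff φ 2 (v + Complex.I) * ff φ 2 (v + 2 * Complex.I) *
        ff φ 2 (v + (8 / 5 : ℂ) * Complex.I) * ff φ 3 (v + 5 * Complex.I) *
        ff φ 4 (v - 4 * Complex.I) =
      ff φ 5 (v - 7 * Complex.I) * ff φ 5 (v + Complex.I) *
        ff φ 2 (v - (27 / 5 : ℂ) * Complex.I) := by
  have shift (a b : ℂ) (n : ℕ) (h : a = b + n * (16 / 5)) : φ (v + a * I) = φ (v + b * I) := by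
    rw [h, add_mul, ← add_assoc, mul_assoc]
    exact Periodic.nat_mul hper n _
  rw [show v + I = v + 1 * I by rw [one_mul]]
  simp only [ff_succ_eq_prod_range, prod_range_succ, prod_range_zero, sub_eq_add_neg, ← neg_mul,
    add_assoc, ← add_mul]
  norm_num only
  rw [← shift (1 / 2) (-(59 / 10)) 2 (by norm_num), ← shift (3 / 2) (-(49 / 10)) 2 (by norm_num),
    ← shift (11 / 10) (-(17 / 2)) 3 (by norm_num), ← shift (21 / 10) (-(15 / 2)) 3 (by norm_num),
    ← shift (11 / 2) (-(21 / 2)) 5 (by norm_num), ← shift (13 / 2) (-(19 / 2)) 5 (by norm_num)]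
  ring

end
end
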